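/- Let Ω ⊂ ℂⁿ (n ≥ 2) be a bounded domain. Suppose there exists a constant C > 0 and a negative plurisubharmonic function U on Ω, smooth on Ω, satisfying |U(z)| ≤ C·δ_Ω(z)^{2/m} and ⟨v, (H_ℂ U)(z) v⟩ ≥ ‖v‖² for all z ∈ Ω and v ∈ ℂⁿ, where m > 2. Then there exists a constant c > 0 such that the Kobayashi metric satisfies k_Ω(z; v) ≥ c·‖v‖ / δ_Ω(z)^{1/m} for all z ∈ Ω and v ∈ ℂⁿ. -/

import Mathlib

open Metric Set MeasureTheory Filter

/-- The Poincaré distance on the unit disc. -/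
noncomputable def poincareDist (a b : ℂ) : ℝ :=
  (1 / 2) * Real.log ((1 + ‖(a - b) / (1 - (starRingEnd ℂ) a * b)‖) /
    (1 - ‖(a - b) / (1 - (starRingEnd ℂ) a * b)‖))

/-- The Kobayashi pseudometric (infinitesimal). -/
noncomputable def kobMetric {n : ℕ} (Ω : Set (EuclideanSpace ℂ (Fin n)))
    (z v : EuclideanSpace ℂ (Fin n)) : ℝ :=
  sInf {r : ℝ | ∃ (c : ℂ) (f : ℂ → EuclideanSpace ℂ (Fin n)),
    DifferentiableOn ℂ f (ball 0 1) ∧ MapsTo f (ball 0 1) Ω ∧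
    f 0 = z ∧ c • derivWithin f (ball 0 1) 0 = v ∧ r = ‖c‖}

/-- The Lempert function of `Ω`. -/
noncomputable def lempert {n : ℕ} (Ω : Set (EuclideanSpace ℂ (Fin n)))
    (z w : EuclideanSpace ℂ (Fin n)) : ℝ :=
  sInf {r : ℝ | ∃ (f : ℂ → EuclideanSpace ℂ (Fin n)) (ζ₁ ζ₂ : ℂ),
    DifferentiableOn ℂ f (ball 0 1) ∧ MapsTo f (ball 0 1) Ω ∧
    ζ₁ ∈ ball (0 : ℂ) 1 ∧ ζ₂ ∈ ball (0 : ℂ) 1 ∧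
    f ζ₁ = z ∧ f ζ₂ = w ∧ r = poincareDist ζ₁ ζ₂}

/-- The Kobayashi pseudodistance of `Ω`, as the infimum over chains of analytic discs. -/
noncomputable def kobDist {n : ℕ} (Ω : Set (EuclideanSpace ℂ (Fin n)))
    (z w : EuclideanSpace ℂ (Fin n)) : ℝ :=
  sInf {r : ℝ | ∃ (N : ℕ) (c : ℕ → EuclideanSpace ℂ (Fin n)),
    c 0 = z ∧ c N = w ∧ (∀ i ≤ N, c i ∈ Ω) ∧
    r = ∑ i ∈ Finset.range N, lempert Ω (c i) (c (i + 1))}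

/-- `Ω` is Kobayashi hyperbolic: the Kobayashi pseudodistance is a distance. -/
def KobHyperbolic {n : ℕ} (Ω : Set (EuclideanSpace ℂ (Fin n))) : Prop :=
  ∀ z ∈ Ω, ∀ w ∈ Ω, z ≠ w → 0 < kobDist Ω z w

/-- Plurisubharmonicity on `Ω` via upper semicontinuity and the sub-mean-value
inequality on complex lines. -/
def IsPSH {n : ℕ} (Ω : Set (EuclideanSpace ℂ (Fin n)))
    (u : EuclideanSpace ℂ (Fin n) → ℝ) : Prop :=
  UpperSemicontinuousOn u Ω ∧
  ∀ z ∈ Ω, ∀ w : EuclideanSpace ℂ (Fin n), ∀ r : ℝ, 0 < r →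
    (∀ ζ : ℂ, ‖ζ‖ ≤ r → z + ζ • w ∈ Ω) →
    u z ≤ (1 / (2 * Real.pi)) *
      ∫ θ in (0 : ℝ)..(2 * Real.pi), u (z + ((r : ℂ) * Complex.exp (θ * Complex.I)) • w)

/-- The quadratic form of the complex Hessian of `u` at `z` applied to `v`:
`⟨v, (H_ℂ u)(z) v⟩ = (1/4)·(Laplacian of ζ ↦ u(z + ζ v) at 0)`. -/
noncomputable def cHess {n : ℕ} (u : EuclideanSpace ℂ (Fin n) → ℝ)
    (z v : EuclideanSpace ℂ (Fin n)) : ℝ :=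
  (1 / 4) * (iteratedDeriv 2 (fun t : ℝ => u (z + (t : ℂ) • v)) 0 +
    iteratedDeriv 2 (fun t : ℝ => u (z + ((t : ℝ) * Complex.I) • v)) 0)

section SibonyAux
open Topology

noncomputable section



lemma slide_hasDerivAt {F : ℂ → ℝ} {ζ' : ℂ} {u₀ : ℂ} {d : ℝ}
    (H : HasDerivAt (fun σ : ℝ => F (ζ' + σ • u₀)) d 0) (ζ : ℂ) (τ₀ : ℝ)
    (hζ' : ζ' = ζ + τ₀ • u₀) :
    HasDerivAt (fun τ : ℝ => F (ζ + τ • u₀)) d τ₀ := by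
  have hcomp : (fun τ : ℝ => F (ζ + τ • u₀)) =
      (fun σ : ℝ => F (ζ' + σ • u₀)) ∘ (fun τ : ℝ => τ - τ₀) := by
    funext τ
    simp only [Function.comp, hζ']
    congr 1
    rw [add_assoc, ← add_smul]
    congr 1
    ring
  rw [hcomp]
  have h2 : HasDerivAt (fun τ : ℝ => τ - τ₀) 1 τ₀ := (hasDerivAt_id τ₀).sub_const τ₀
  simpa using HasDerivAt.comp_of_eq (hh₂ := H) (hh := h2) (hy := by ring)

lemma secondDerivTest {ψ ψ₁ ψ₂ : ℝ → ℝ}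
    (h1 : ∀ᶠ τ in 𝓝 (0 : ℝ), HasDerivAt ψ (ψ₁ τ) τ)
    (h2 : ∀ᶠ τ in 𝓝 (0 : ℝ), HasDerivAt ψ₁ (ψ₂ τ) τ)
    (hc : ContinuousAt ψ₂ 0) (hm : IsLocalMax ψ 0) : ψ₂ 0 ≤ 0 := by
  by_contra hpos
  push_neg at hpos
  have h10 : ψ₁ 0 = 0 := by
    have h := hm.deriv_eq_zero
    rwa [h1.self_of_nhds.deriv] at h
  have hev : ∀ᶠ τ in 𝓝 (0 : ℝ), 0 < ψ₂ τ := hc.eventually (lt_mem_nhds hpos)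
  obtain ⟨δ, hδ, hall⟩ := Metric.eventually_nhds_iff.mp ((h1.and h2).and hev)
  set δ' := δ / 2 with hδ'def
  have hδ'pos : 0 < δ' := by positivity
  have hmem : ∀ τ ∈ Icc (0 : ℝ) δ', dist τ (0 : ℝ) < δ := by
    intro τ hτ
    rw [Real.dist_eq, sub_zero, _root_.abs_of_nonneg hτ.1]
    have := hτ.2
    simp only [hδ'def] at this ⊢
    linarith
  have hmono1 : StrictMonoOn ψ₁ (Icc 0 δ') := by
    apply strictMonoOn_of_deriv_pos (convex_Icc _ _)
    · intro τ hτ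
      exact ((hall (hmem τ hτ)).1.2).continuousAt.continuousWithinAt
    · intro τ hτ
      rw [interior_Icc] at hτ
      rw [((hall (hmem τ (Ioo_subset_Icc_self hτ))).1.2).deriv]
      exact (hall (hmem τ (Ioo_subset_Icc_self hτ))).2
  have hψ₁pos : ∀ τ ∈ Ioc (0 : ℝ) δ', 0 < ψ₁ τ := by
    intro τ hτ
    have := hmono1 ⟨le_refl _, hδ'pos.le⟩ ⟨hτ.1.le, hτ.2⟩ hτ.1
    rwa [h10] at this
  have hmono : StrictMonoOn ψ (Icc 0 δ') := by
    apply strictMonoOn_of_deriv_pos (convex_Icc _ _)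
    · intro τ hτ
      exact ((hall (hmem τ hτ)).1.1).continuousAt.continuousWithinAt
    · intro τ hτ
      rw [interior_Icc] at hτ
      rw [((hall (hmem τ (Ioo_subset_Icc_self hτ))).1.1).deriv]
      exact hψ₁pos τ ⟨hτ.1, hτ.2.le⟩
  have hcontra : ∀ᶠ τ in 𝓝[>] (0 : ℝ), ψ τ ≤ ψ 0 := hm.filter_mono nhdsWithin_le_nhds
  have hIoc : Ioc (0 : ℝ) δ' ∈ 𝓝[>] (0 : ℝ) :=
    Ioc_mem_nhdsGT_of_mem ⟨le_refl _, hδ'pos⟩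
  obtain ⟨τ, hτle, hτIoc⟩ := (hcontra.and (eventually_of_mem hIoc fun _ h => h)).exists
  have : ψ 0 < ψ τ := hmono ⟨le_refl _, hδ'pos.le⟩ ⟨hτIoc.1.le, hτIoc.2⟩ hτIoc.1
  linarith




lemma line_tendsto (ζ u₀ : ℂ) : Tendsto (fun τ : ℝ => ζ + τ • u₀) (𝓝 0) (𝓝 ζ) := by
  have : Continuous (fun τ : ℝ => ζ + τ • u₀) := by continuity
  have h := this.tendsto 0
  simpa using h

lemma maxprin {Φ : ℂ → ℝ} {Φd Φdd : ℂ → ℂ → ℝ} {s : Set ℂ} (hs : IsOpen s)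
    (hΦc : ContinuousOn Φ s)
    (hd : ∀ ζ ∈ s, ∀ u₀ : ℂ, HasDerivAt (fun τ : ℝ => Φ (ζ + τ • u₀)) (Φd ζ u₀) 0)
    (hdd : ∀ ζ ∈ s, ∀ u₀ : ℂ, HasDerivAt (fun τ : ℝ => Φd (ζ + τ • u₀) u₀) (Φdd ζ u₀) 0)
    (hcont : ∀ u₀ : ℂ, ContinuousOn (fun ζ => Φdd ζ u₀) s)
    (hsub : ∀ ζ ∈ s, 0 < Φdd ζ 1 + Φdd ζ Complex.I)
    {R : ℝ} (hR : 0 < R) (hKs : closedBall (0 : ℂ) R ⊆ s) :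
    ∃ ζ ∈ sphere (0 : ℂ) R, Φ 0 ≤ Φ ζ := by
  obtain ⟨ζs, hζsK, hmax⟩ := (isCompact_closedBall (0 : ℂ) R).exists_isMaxOn
    ⟨0, mem_closedBall_self hR.le⟩ (hΦc.mono hKs)
  by_cases hsph : ζs ∈ sphere (0 : ℂ) R
  · exact ⟨ζs, hsph, hmax (mem_closedBall_self hR.le)⟩
  exfalso
  have hζball : ζs ∈ ball (0 : ℂ) R := by
    rcases lt_or_eq_of_le (mem_closedBall.mp hζsK) with h | h
    · exact mem_ball.mpr h
    · exact absurd (mem_sphere.mpr h) hsph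
  have hζs : ζs ∈ s := hKs hζsK
  have hloc : IsLocalMax Φ ζs :=
    hmax.isLocalMax (mem_nhds_iff.mpr ⟨ball 0 R, ball_subset_closedBall, isOpen_ball, hζball⟩)
  have key : ∀ u₀ : ℂ, Φdd ζs u₀ ≤ 0 := by
    intro u₀
    have hmemev : ∀ᶠ τ in 𝓝 (0 : ℝ), ζs + τ • u₀ ∈ s :=
      (line_tendsto ζs u₀).eventually (hs.mem_nhds hζs)
    have h1 : ∀ᶠ τ in 𝓝 (0 : ℝ), HasDerivAt (fun τ : ℝ => Φ (ζs + τ • u₀))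
        (Φd (ζs + τ • u₀) u₀) τ := by
      filter_upwards [hmemev] with τ hτ
      exact slide_hasDerivAt (hd _ hτ u₀) ζs τ rfl
    have h2 : ∀ᶠ τ in 𝓝 (0 : ℝ), HasDerivAt (fun τ : ℝ => Φd (ζs + τ • u₀) u₀)
        (Φdd (ζs + τ • u₀) u₀) τ := by
      filter_upwards [hmemev] with τ hτ
      exact slide_hasDerivAt (F := fun ζ => Φd ζ u₀) (hdd _ hτ u₀) ζs τ rfl
    have hc : ContinuousAt (fun τ : ℝ => Φdd (ζs + τ • u₀) u₀) 0 := by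
      have hca : ContinuousAt (fun ζ : ℂ => Φdd ζ u₀) ((fun τ : ℝ => ζs + τ • u₀) 0) := by
        simpa using (hcont u₀).continuousAt (hs.mem_nhds hζs)
      have hl : ContinuousAt (fun τ : ℝ => ζs + τ • u₀) 0 := by
        apply Continuous.continuousAt; continuity
      exact ContinuousAt.comp (g := fun ζ : ℂ => Φdd ζ u₀) (f := fun τ : ℝ => ζs + τ • u₀) hca hl
    have hm : IsLocalMax (fun τ : ℝ => Φ (ζs + τ • u₀)) 0 := by
      have := (line_tendsto ζs u₀).eventually hloc
      simpa [IsLocalMax, IsMaxFilter] using this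
    have := secondDerivTest h1 h2 hc hm
    simpa using this
  have := hsub ζs hζs
  have k1 := key 1
  have k2 := key Complex.I
  linarith



variable {E : Type*} [NormedAddCommGroup E] [NormedSpace ℂ E]

/-- First directional data of `u ∘ h` along complex direction `u₀`. -/
def Cd (u : E → ℝ) (h : ℂ → E) (ζ u₀ : ℂ) : ℝ :=
  fderiv ℝ u (h ζ) (u₀ • deriv h ζ)

/-- Second directional data of `u ∘ h` along complex direction `u₀`. -/
def Cdd (u : E → ℝ) (h : ℂ → E) (ζ u₀ : ℂ) : ℝ :=
  fderiv ℝ (fderiv ℝ u) (h ζ) (u₀ • deriv h ζ) (u₀ • deriv h ζ)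
    + fderiv ℝ u (h ζ) ((u₀ * u₀) • deriv (deriv h) ζ)

lemma h_line_hasDerivAt {s : Set ℂ} (hs : IsOpen s) {h : ℂ → E}
    (hh : DifferentiableOn ℂ h s) {ζ : ℂ} (hζ : ζ ∈ s) (u₀ : ℂ) :
    HasDerivAt (fun τ : ℝ => h (ζ + τ • u₀)) (u₀ • deriv h ζ) 0 := by
  have hfd : HasDerivAt h (deriv h ζ) ζ :=
    ((hh ζ hζ).differentiableAt (hs.mem_nhds hζ)).hasDerivAt
  have hline : HasDerivAt (fun τ : ℝ => ζ + τ • u₀) u₀ 0 := by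
    simpa using ((hasDerivAt_id (0 : ℝ)).smul_const u₀).const_add ζ
  have hfd' : HasDerivAt h (deriv h ζ) ((fun τ : ℝ => ζ + τ • u₀) 0) := by simpa using hfd
  have := hfd'.scomp 0 hline
  simpa [Function.comp_def] using this

lemma derivh_line_hasDerivAt [CompleteSpace E] {s : Set ℂ} (hs : IsOpen s) {h : ℂ → E}
    (hh : DifferentiableOn ℂ h s) {ζ : ℂ} (hζ : ζ ∈ s) (u₀ : ℂ) :
    HasDerivAt (fun τ : ℝ => deriv h (ζ + τ • u₀)) (u₀ • deriv (deriv h) ζ) 0 := by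
  have hda : DifferentiableOn ℂ (deriv h) s :=
    ((hh.analyticOnNhd hs).deriv).differentiableOn
  exact h_line_hasDerivAt hs hda hζ u₀

lemma pieceA {s : Set ℂ} (hs : IsOpen s) {h : ℂ → E} (hh : DifferentiableOn ℂ h s)
    {t : Set E} (ht : IsOpen t) {u : E → ℝ} (hu : ContDiffOn ℝ 2 u t)
    (hm : MapsTo h s t) {ζ : ℂ} (hζ : ζ ∈ s) (u₀ : ℂ) :
    HasDerivAt (fun τ : ℝ => u (h (ζ + τ • u₀))) (Cd u h ζ u₀) 0 := by
  have hline := h_line_hasDerivAt hs hh hζ u₀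
  have hud : HasFDerivAt u (fderiv ℝ u (h ζ)) (h ζ) :=
    ((hu.contDiffAt (ht.mem_nhds (hm hζ))).differentiableAt (by norm_num)).hasFDerivAt
  have := hud.comp_hasDerivAt_of_eq 0 hline (by simp)
  simpa [Function.comp_def, Cd] using this

lemma pieceB [CompleteSpace E] {s : Set ℂ} (hs : IsOpen s) {h : ℂ → E}
    (hh : DifferentiableOn ℂ h s)
    {t : Set E} (ht : IsOpen t) {u : E → ℝ} (hu : ContDiffOn ℝ 2 u t)
    (hm : MapsTo h s t) {ζ : ℂ} (hζ : ζ ∈ s) (u₀ : ℂ) :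
    HasDerivAt (fun τ : ℝ => Cd u h (ζ + τ • u₀) u₀) (Cdd u h ζ u₀) 0 := by
  have hlineh := h_line_hasDerivAt hs hh hζ u₀
  have hQ : HasFDerivAt (fderiv ℝ u) (fderiv ℝ (fderiv ℝ u) (h ζ)) (h ζ) := by
    have hca : ContDiffAt ℝ 2 u (h ζ) := hu.contDiffAt (ht.mem_nhds (hm hζ))
    have h1 : ContDiffAt ℝ 1 (fderiv ℝ u) (h ζ) := hca.fderiv_right (by norm_num)
    exact (h1.differentiableAt (by norm_num)).hasFDerivAt
  have hA : HasDerivAt (fun τ : ℝ => fderiv ℝ u (h (ζ + τ • u₀)))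
      (fderiv ℝ (fderiv ℝ u) (h ζ) (u₀ • deriv h ζ)) 0 := by
    have := hQ.comp_hasDerivAt_of_eq 0 hlineh (by simp)
    simpa [Function.comp_def] using this
  have hb : HasDerivAt (fun τ : ℝ => u₀ • deriv h (ζ + τ • u₀))
      (u₀ • (u₀ • deriv (deriv h) ζ)) 0 :=
    (derivh_line_hasDerivAt hs hh hζ u₀).const_smul u₀
  have hres := hA.clm_apply hb
  have h0 : (fun τ : ℝ => (fderiv ℝ u (h (ζ + τ • u₀))) (u₀ • deriv h (ζ + τ • u₀)))
      = fun τ : ℝ => Cd u h (ζ + τ • u₀) u₀ := rfl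
  rw [h0] at hres
  refine hres.congr_deriv ?_
  simp [Cdd, smul_smul]

lemma pieceC [CompleteSpace E] {s : Set ℂ} (hs : IsOpen s) {h : ℂ → E}
    (hh : DifferentiableOn ℂ h s)
    {t : Set E} (ht : IsOpen t) {u : E → ℝ} (hu : ContDiffOn ℝ 2 u t)
    (hm : MapsTo h s t) (u₀ : ℂ) :
    ContinuousOn (fun ζ => Cdd u h ζ u₀) s := by
  have han := hh.analyticOnNhd hs
  have hch : ContinuousOn h s := hh.continuousOn
  have hcd : ContinuousOn (deriv h) s := han.deriv.continuousOn
  have hcd2 : ContinuousOn (deriv (deriv h)) s := han.deriv.deriv.continuousOn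
  have hfc : ContinuousOn (fderiv ℝ u) t :=
    hu.continuousOn_fderiv_of_isOpen ht (by norm_num)
  have hfc2 : ContinuousOn (fderiv ℝ (fderiv ℝ u)) t := by
    have h1 : ContDiffOn ℝ 1 (fderiv ℝ u) t := hu.fderiv_of_isOpen ht (by norm_num)
    exact h1.continuousOn_fderiv_of_isOpen ht (by norm_num)
  apply ContinuousOn.add
  · exact ((hfc2.comp hch hm).clm_apply (hcd.const_smul u₀)).clm_apply
      (hcd.const_smul u₀)
  · exact (hfc.comp hch hm).clm_apply (hcd2.const_smul (u₀ * u₀))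

lemma Cdd_one_add_I (u : E → ℝ) (h : ℂ → E) (ζ : ℂ) :
    Cdd u h ζ 1 + Cdd u h ζ Complex.I
      = fderiv ℝ (fderiv ℝ u) (h ζ) (deriv h ζ) (deriv h ζ)
        + fderiv ℝ (fderiv ℝ u) (h ζ) (Complex.I • deriv h ζ) (Complex.I • deriv h ζ) := by
  simp only [Cdd, one_smul, one_mul, Complex.I_mul_I, neg_one_smul, map_neg]
  ring



def NmapCLM : ℂ →L[ℝ] ℂ →L[ℝ] ℝ :=
  (2 : ℝ) • (Complex.reCLM.smulRight Complex.reCLM + Complex.imCLM.smulRight Complex.imCLM)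

lemma NmapCLM_apply (w b : ℂ) : NmapCLM w b = 2 * (w.re * b.re + w.im * b.im) := by
  simp [NmapCLM]
  ring

lemma hasFDerivAt_normSq (w : ℂ) : HasFDerivAt Complex.normSq (NmapCLM w) w := by
  have h1 : HasFDerivAt (fun z : ℂ => z.re) Complex.reCLM w := Complex.reCLM.hasFDerivAt
  have h2 : HasFDerivAt (fun z : ℂ => z.im) Complex.imCLM w := Complex.imCLM.hasFDerivAt
  have hsum := (h1.mul h1).add (h2.mul h2)
  have hfun : Complex.normSq = fun z : ℂ => z.re * z.re + z.im * z.im := by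
    funext z; exact Complex.normSq_apply z
  rw [hfun]
  refine hsum.congr_fderiv ?_
  ext b
  simp [NmapCLM]
  ring

lemma fderiv_normSq_eq : fderiv ℝ Complex.normSq = fun w => NmapCLM w :=
  funext fun w => (hasFDerivAt_normSq w).fderiv

lemma fderiv2_normSq (p : ℂ) : fderiv ℝ (fderiv ℝ Complex.normSq) p = NmapCLM := by
  rw [fderiv_normSq_eq]
  exact NmapCLM.fderiv

lemma contDiff_normSq2 : ContDiff ℝ 2 Complex.normSq := by
  have hfun : Complex.normSq = fun z : ℂ => z.re * z.re + z.im * z.im := by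
    funext z; exact Complex.normSq_apply z
  rw [hfun]
  exact (Complex.reCLM.contDiff.mul Complex.reCLM.contDiff).add
    (Complex.imCLM.contDiff.mul Complex.imCLM.contDiff)

lemma fderiv_re_eq : fderiv ℝ Complex.re = fun _ : ℂ => Complex.reCLM := by
  funext w
  exact Complex.reCLM.hasFDerivAt.fderiv

lemma fderiv2_re (p : ℂ) : fderiv ℝ (fderiv ℝ Complex.re) p = 0 := by
  rw [fderiv_re_eq]
  exact fderiv_const_apply Complex.reCLM

lemma contDiff_re2 : ContDiff ℝ 2 Complex.re := Complex.reCLM.contDiff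

lemma hasFDerivAt_mulNormSq (ε : ℝ) (w : ℂ) :
    HasFDerivAt (fun w : ℂ => ε * Complex.normSq w) (ε • NmapCLM w) w :=
  (hasFDerivAt_normSq w).const_mul ε

lemma fderiv2_mulNormSq (ε : ℝ) (p : ℂ) :
    fderiv ℝ (fderiv ℝ (fun w : ℂ => ε * Complex.normSq w)) p = ε • NmapCLM := by
  have h1 : fderiv ℝ (fun w : ℂ => ε * Complex.normSq w) = fun w => (ε • NmapCLM) w := by
    funext w
    rw [(hasFDerivAt_mulNormSq ε w).fderiv]
    ext b
    simp
  rw [h1]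
  exact (ε • NmapCLM).fderiv

lemma contDiff_mulNormSq (ε : ℝ) : ContDiff ℝ 2 (fun w : ℂ => ε * Complex.normSq w) :=
  contDiff_const.mul contDiff_normSq2


variable {E : Type*} [NormedAddCommGroup E] [NormedSpace ℂ E]

lemma iteratedDeriv_two_line [CompleteSpace E] {s : Set ℂ} (hs : IsOpen s) {h : ℂ → E}
    (hh : DifferentiableOn ℂ h s)
    {t : Set E} (ht : IsOpen t) {u : E → ℝ} (hu : ContDiffOn ℝ 2 u t)
    (hm : MapsTo h s t) {ζ : ℂ} (hζ : ζ ∈ s) (u₀ : ℂ) :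
    iteratedDeriv 2 (fun τ : ℝ => u (h (ζ + τ • u₀))) 0 = Cdd u h ζ u₀ := by
  rw [iteratedDeriv_succ, iteratedDeriv_one]
  have hmemev : ∀ᶠ τ in 𝓝 (0 : ℝ), ζ + τ • u₀ ∈ s :=
    (line_tendsto ζ u₀).eventually (hs.mem_nhds hζ)
  have hEq : deriv (fun τ : ℝ => u (h (ζ + τ • u₀))) =ᶠ[𝓝 (0 : ℝ)]
      (fun τ : ℝ => Cd u h (ζ + τ • u₀) u₀) := by
    filter_upwards [hmemev] with τ hτ
    exact (slide_hasDerivAt (F := fun ξ : ℂ => u (h ξ)) (pieceA hs hh ht hu hm hτ u₀) ζ τ rfl).deriv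
  rw [hEq.deriv_eq]
  exact (pieceB hs hh ht hu hm hζ u₀).deriv

lemma cHess_eq {n : ℕ} {Ω : Set (EuclideanSpace ℂ (Fin n))} (hΩ : IsOpen Ω)
    {U : EuclideanSpace ℂ (Fin n) → ℝ} (hU : ContDiffOn ℝ 2 U Ω)
    {p : EuclideanSpace ℂ (Fin n)} (hp : p ∈ Ω) (v : EuclideanSpace ℂ (Fin n)) :
    cHess U p v = (1 / 4) *
      (fderiv ℝ (fderiv ℝ U) p v v
        + fderiv ℝ (fderiv ℝ U) p (Complex.I • v) (Complex.I • v)) := by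
  set h : ℂ → EuclideanSpace ℂ (Fin n) := fun ξ => p + ξ • v with hhdef
  have hder : ∀ ξ : ℂ, HasDerivAt h v ξ := by
    intro ξ
    simpa [hhdef] using ((hasDerivAt_id ξ).smul_const v).const_add p
  have hderiv_h : deriv h = fun _ => v := funext fun ξ => (hder ξ).deriv
  have hderiv2 : deriv (deriv h) = fun _ => 0 := by
    rw [hderiv_h]
    funext ξ
    simp
  have hcont : Continuous h := by
    rw [hhdef]
    continuity
  set s : Set ℂ := h ⁻¹' Ω with hsdef
  have hs : IsOpen s := hΩ.preimage hcont
  have h0s : (0 : ℂ) ∈ s := by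
    simp only [hsdef, mem_preimage, hhdef]
    simpa using hp
  have hh : DifferentiableOn ℂ h s := fun ξ _ =>
    (hder ξ).differentiableAt.differentiableWithinAt
  have hmaps : MapsTo h s Ω := fun ξ hξ => hξ
  have e1 : (fun t : ℝ => U (p + (t : ℂ) • v)) = fun τ : ℝ => U (h ((0 : ℂ) + τ • (1 : ℂ))) := by
    funext τ
    simp [hhdef, Complex.real_smul]
  have e2 : (fun t : ℝ => U (p + ((t : ℝ) * Complex.I) • v))
      = fun τ : ℝ => U (h ((0 : ℂ) + τ • Complex.I)) := by
    funext τ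
    simp [hhdef, Complex.real_smul]
  rw [cHess, e1, e2,
    iteratedDeriv_two_line hs hh hΩ hU hmaps h0s 1,
    iteratedDeriv_two_line hs hh hΩ hU hmaps h0s Complex.I]
  have hzero : h 0 = p := by simp [hhdef]
  have hC1 : Cdd U h 0 1 = fderiv ℝ (fderiv ℝ U) p v v := by
    simp [Cdd, hderiv_h, hderiv2, hzero]
  have hCI : Cdd U h 0 Complex.I
      = fderiv ℝ (fderiv ℝ U) p (Complex.I • v) (Complex.I • v) := by
    simp [Cdd, hderiv_h, hderiv2, hzero]
  rw [hC1, hCI]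

lemma Cdd_normSq_line (h : ℂ → ℂ) (ζ : ℂ) :
    Cdd Complex.normSq h ζ 1 + Cdd Complex.normSq h ζ Complex.I
      = 4 * Complex.normSq (deriv h ζ) := by
  rw [Cdd_one_add_I, fderiv2_normSq]
  simp only [NmapCLM_apply, smul_eq_mul, Complex.mul_re, Complex.mul_im,
    Complex.I_re, Complex.I_im, Complex.normSq_apply]
  ring

lemma Cdd_re_line (h : ℂ → ℂ) (ζ : ℂ) :
    Cdd Complex.re h ζ 1 + Cdd Complex.re h ζ Complex.I = 0 := by
  rw [Cdd_one_add_I, fderiv2_re]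
  simp

lemma Cdd_mulNormSq_id (ε : ℝ) (ζ : ℂ) :
    Cdd (fun w : ℂ => ε * Complex.normSq w) id ζ 1
      + Cdd (fun w : ℂ => ε * Complex.normSq w) id ζ Complex.I = 4 * ε := by
  rw [Cdd_one_add_I, fderiv2_mulNormSq]
  have : deriv (id : ℂ → ℂ) ζ = 1 := by simp
  rw [this]
  simp only [ContinuousLinearMap.smul_apply, NmapCLM_apply, smul_eq_mul, Complex.one_re,
    Complex.one_im, Complex.mul_re, Complex.mul_im, Complex.I_re, Complex.I_im]
  ring

set_option maxHeartbeats 1000000 in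
lemma key_inner {n : ℕ} {Ω : Set (EuclideanSpace ℂ (Fin n))} (hΩ : IsOpen Ω)
    {U : EuclideanSpace ℂ (Fin n) → ℝ}
    (hneg : ∀ z ∈ Ω, U z < 0) (hU : ContDiffOn ℝ 2 U Ω)
    (hhess : ∀ z ∈ Ω, ∀ v : EuclideanSpace ℂ (Fin n), ‖v‖ ^ 2 ≤ cHess U z v)
    {f : ℂ → EuclideanSpace ℂ (Fin n)} (hf : DifferentiableOn ℂ f (ball 0 1))
    (hmapf : MapsTo f (ball 0 1) Ω) {z : EuclideanSpace ℂ (Fin n)} (hz : z ∈ Ω)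
    (hf0 : f 0 = z)
    (ha : deriv f 0 ≠ 0) {r : ℝ} (hr : r ∈ Ioo (0 : ℝ) 1) {ε : ℝ} (hε : 0 < ε) :
    U z + ‖deriv f 0‖ ^ 2 * r ^ 2 ≤ ε * r ^ 2 := by
  set a : EuclideanSpace ℂ (Fin n) := deriv f 0 with hadef
  have hna : ‖a‖ ≠ 0 := norm_ne_zero_iff.mpr ha
  have hnapos : 0 < ‖a‖ := norm_pos_iff.mpr ha
  set r' : ℝ := (1 + r) / 2 with hr'def
  have hrr' : r < r' := by rw [hr'def]; linarith [hr.2]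
  have hr'1 : r' < 1 := by rw [hr'def]; linarith [hr.2]
  have hsub1 : ball (0 : ℂ) r' ⊆ ball (0 : ℂ) 1 := ball_subset_ball hr'1.le
  have h01 : (0 : ℂ) ∈ ball (0 : ℂ) 1 := mem_ball_self one_pos
  set G : ℂ → ℂ := fun ζ => (‖a‖ : ℂ)⁻¹ * (inner ℂ a (f ζ - z) : ℂ) with hGdef
  have hGd : ∀ ζ ∈ ball (0 : ℂ) 1,
      HasDerivAt G ((‖a‖ : ℂ)⁻¹ * (inner ℂ a (deriv f ζ) : ℂ)) ζ := by
    intro ζ hζ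
    have hfd : HasDerivAt f (deriv f ζ) ζ :=
      ((hf ζ hζ).differentiableAt (isOpen_ball.mem_nhds hζ)).hasDerivAt
    have h1 : HasDerivAt (fun ζ => f ζ - z) (deriv f ζ) ζ := hfd.sub_const z
    have h2 := (innerSL ℂ a).hasFDerivAt.comp_hasDerivAt ζ h1
    have h3 := h2.const_mul ((‖a‖ : ℂ)⁻¹)
    rw [hGdef]
    exact h3
  have hG : DifferentiableOn ℂ G (ball 0 1) := fun ζ hζ =>
    ((hGd ζ hζ).differentiableAt).differentiableWithinAt
  have hG0 : G 0 = 0 := by simp [hGdef, hf0]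
  have hderivG : ∀ ζ ∈ ball (0 : ℂ) 1,
      deriv G ζ = (‖a‖ : ℂ)⁻¹ * (inner ℂ a (deriv f ζ) : ℂ) := fun ζ hζ => (hGd ζ hζ).deriv
  have hderivG0 : deriv G 0 = (‖a‖ : ℂ) := by
    rw [hderivG 0 h01, ← hadef, inner_self_eq_norm_sq_to_K]
    have hcast : ((‖a‖ : ℝ) : ℂ) ≠ 0 := by exact_mod_cast hna
    field_simp
    rfl
  set D : ℂ → ℂ := dslope G 0 with hDdef
  have hD : DifferentiableOn ℂ D (ball 0 1) :=
    (Complex.differentiableOn_dslope (isOpen_ball.mem_nhds h01)).mpr hG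
  set P : ℂ → ℂ := fun ζ =>
    ((‖a‖ ^ 2 * r ^ 2 : ℝ) : ℂ) - ((2 * r ^ 2 * ‖a‖ : ℝ) : ℂ) * D ζ with hPdef
  have hP : DifferentiableOn ℂ P (ball 0 1) := (hD.const_mul _).const_sub _
  set Φ : ℂ → ℝ := fun ζ =>
    U (f ζ) - Complex.normSq (G ζ) - (P ζ).re + ε * Complex.normSq ζ with hΦdef
  set Φd : ℂ → ℂ → ℝ := fun ζ u₀ =>
    Cd U f ζ u₀ - Cd Complex.normSq G ζ u₀ - Cd Complex.re P ζ u₀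
      + Cd (fun w : ℂ => ε * Complex.normSq w) id ζ u₀ with hΦddef
  set Φdd : ℂ → ℂ → ℝ := fun ζ u₀ =>
    Cdd U f ζ u₀ - Cdd Complex.normSq G ζ u₀ - Cdd Complex.re P ζ u₀
      + Cdd (fun w : ℂ => ε * Complex.normSq w) id ζ u₀ with hΦdddef
  have hnormSqCD : ContDiffOn ℝ 2 Complex.normSq (univ : Set ℂ) := contDiff_normSq2.contDiffOn
  have hreCD : ContDiffOn ℝ 2 Complex.re (univ : Set ℂ) := contDiff_re2.contDiffOn
  have hmulCD : ContDiffOn ℝ 2 (fun w : ℂ => ε * Complex.normSq w) (univ : Set ℂ) :=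
    (contDiff_mulNormSq ε).contDiffOn
  have hd : ∀ ζ ∈ ball (0 : ℂ) r', ∀ u₀ : ℂ,
      HasDerivAt (fun τ : ℝ => Φ (ζ + τ • u₀)) (Φd ζ u₀) 0 := by
    intro ζ hζ u₀
    have h1 := pieceA isOpen_ball hf hΩ hU hmapf (hsub1 hζ) u₀
    have h2 := pieceA isOpen_ball hG isOpen_univ hnormSqCD (mapsTo_univ _ _) (hsub1 hζ) u₀
    have h3 := pieceA isOpen_ball hP isOpen_univ hreCD (mapsTo_univ _ _) (hsub1 hζ) u₀
    have h4 := pieceA isOpen_univ differentiableOn_id isOpen_univ hmulCD (mapsTo_univ _ _)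
      (mem_univ ζ) u₀
    exact ((h1.sub h2).sub h3).add h4
  have hdd : ∀ ζ ∈ ball (0 : ℂ) r', ∀ u₀ : ℂ,
      HasDerivAt (fun τ : ℝ => Φd (ζ + τ • u₀) u₀) (Φdd ζ u₀) 0 := by
    intro ζ hζ u₀
    have h1 := pieceB isOpen_ball hf hΩ hU hmapf (hsub1 hζ) u₀
    have h2 := pieceB isOpen_ball hG isOpen_univ hnormSqCD (mapsTo_univ _ _) (hsub1 hζ) u₀
    have h3 := pieceB isOpen_ball hP isOpen_univ hreCD (mapsTo_univ _ _) (hsub1 hζ) u₀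
    have h4 := pieceB isOpen_univ differentiableOn_id isOpen_univ hmulCD (mapsTo_univ _ _)
      (mem_univ ζ) u₀
    exact ((h1.sub h2).sub h3).add h4
  have hcont : ∀ u₀ : ℂ, ContinuousOn (fun ζ => Φdd ζ u₀) (ball (0 : ℂ) r') := by
    intro u₀
    have c1 := (pieceC isOpen_ball hf hΩ hU hmapf u₀).mono hsub1
    have c2 := (pieceC isOpen_ball hG isOpen_univ hnormSqCD (mapsTo_univ _ _) u₀).mono hsub1
    have c3 := (pieceC isOpen_ball hP isOpen_univ hreCD (mapsTo_univ _ _) u₀).mono hsub1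
    have c4 := (pieceC isOpen_univ differentiableOn_id isOpen_univ hmulCD
      (mapsTo_univ _ _) u₀).mono (subset_univ (ball (0 : ℂ) r'))
    exact ((c1.sub c2).sub c3).add c4
  have hsubh : ∀ ζ ∈ ball (0 : ℂ) r', 0 < Φdd ζ 1 + Φdd ζ Complex.I := by
    intro ζ hζ
    have hζ1 : ζ ∈ ball (0 : ℂ) 1 := hsub1 hζ
    have hfζ : f ζ ∈ Ω := hmapf hζ1
    have hU4 : Cdd U f ζ 1 + Cdd U f ζ Complex.I = 4 * cHess U (f ζ) (deriv f ζ) := by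
      rw [Cdd_one_add_I, cHess_eq hΩ hU hfζ (deriv f ζ)]
      ring
    have hG4 : Cdd Complex.normSq G ζ 1 + Cdd Complex.normSq G ζ Complex.I
        = 4 * Complex.normSq (deriv G ζ) := Cdd_normSq_line G ζ
    have hre4 : Cdd Complex.re P ζ 1 + Cdd Complex.re P ζ Complex.I = 0 := Cdd_re_line P ζ
    have hmul4 : Cdd (fun w : ℂ => ε * Complex.normSq w) id ζ 1
        + Cdd (fun w : ℂ => ε * Complex.normSq w) id ζ Complex.I = 4 * ε :=
      Cdd_mulNormSq_id ε ζ
    have hineq1 : ‖deriv f ζ‖ ^ 2 ≤ cHess U (f ζ) (deriv f ζ) := hhess _ hfζ _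
    have hineq2 : Complex.normSq (deriv G ζ) ≤ ‖deriv f ζ‖ ^ 2 := by
      rw [hderivG ζ hζ1, Complex.normSq_eq_norm_sq]
      have h7 : ‖(‖a‖ : ℂ)⁻¹ * (inner ℂ a (deriv f ζ) : ℂ)‖ ≤ ‖deriv f ζ‖ := by
        rw [norm_mul]
        have hinv : ‖((‖a‖ : ℝ) : ℂ)⁻¹‖ = ‖a‖⁻¹ := by
          rw [norm_inv]
          simp
        rw [hinv]
        have h6 : ‖(inner ℂ a (deriv f ζ) : ℂ)‖ ≤ ‖a‖ * ‖deriv f ζ‖ := norm_inner_le_norm a _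
        calc ‖a‖⁻¹ * ‖(inner ℂ a (deriv f ζ) : ℂ)‖
            ≤ ‖a‖⁻¹ * (‖a‖ * ‖deriv f ζ‖) :=
              mul_le_mul_of_nonneg_left h6 (by positivity)
          _ = ‖deriv f ζ‖ := by field_simp
      exact pow_le_pow_left₀ (norm_nonneg _) h7 2
    simp only [hΦdddef]
    linarith [hU4, hG4, hre4, hmul4, hineq1, hineq2, hε]
  have hΦc : ContinuousOn Φ (ball (0 : ℂ) r') := by
    have hfc : ContinuousOn f (ball (0 : ℂ) r') := hf.continuousOn.mono hsub1
    have hGc : ContinuousOn G (ball (0 : ℂ) r') := hG.continuousOn.mono hsub1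
    have hPc : ContinuousOn P (ball (0 : ℂ) r') := hP.continuousOn.mono hsub1
    have hc1 : ContinuousOn (fun ζ : ℂ => U (f ζ)) (ball (0 : ℂ) r') :=
      hU.continuousOn.comp hfc (fun ζ hζ => hmapf (hsub1 hζ))
    have hc2 : ContinuousOn (fun ζ : ℂ => Complex.normSq (G ζ)) (ball (0 : ℂ) r') :=
      contDiff_normSq2.continuous.comp_continuousOn hGc
    have hc3 : ContinuousOn (fun ζ : ℂ => (P ζ).re) (ball (0 : ℂ) r') :=
      Complex.continuous_re.comp_continuousOn hPc
    have hc4 : ContinuousOn (fun ζ : ℂ => ε * Complex.normSq ζ) (ball (0 : ℂ) r') :=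
      (continuous_const.mul contDiff_normSq2.continuous).continuousOn
    exact ((hc1.sub hc2).sub hc3).add hc4
  obtain ⟨ζb, hζbs, hΦ0⟩ := maxprin isOpen_ball hΦc hd hdd hcont hsubh hr.1
    (closedBall_subset_ball hrr')
  have hD0 : D 0 = (‖a‖ : ℂ) := by rw [hDdef, dslope_same]; exact hderivG0
  have hP0re : (P 0).re = ‖a‖ ^ 2 * r ^ 2 - 2 * r ^ 2 * ‖a‖ * ‖a‖ := by
    have h8 : P 0 = (((‖a‖ ^ 2 * r ^ 2) - 2 * r ^ 2 * ‖a‖ * ‖a‖ : ℝ) : ℂ) := by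
      simp only [hPdef, hD0]
      push_cast
      ring
    rw [h8, Complex.ofReal_re]
  have hΦ0v : Φ 0 = U z + ‖a‖ ^ 2 * r ^ 2 := by
    simp only [hΦdef, hf0, hG0, hP0re, map_zero, mul_zero, sub_zero, add_zero]
    ring
  have hζbn : ‖ζb‖ = r := by simpa using hζbs
  have hζb1 : ζb ∈ ball (0 : ℂ) 1 := by
    rw [mem_ball, dist_zero_right, hζbn]
    exact hr.2
  have hζbne : ζb ≠ 0 := by
    intro h0
    rw [h0, norm_zero] at hζbn
    exact hr.1.ne hζbn
  have hnormSqζ : Complex.normSq ζb = r ^ 2 := by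
    rw [Complex.normSq_eq_norm_sq, hζbn]
  have hUneg : U (f ζb) ≤ 0 := (hneg _ (hmapf hζb1)).le
  have hDζ : D ζb = G ζb / ζb := by
    rw [hDdef, dslope_of_ne G hζbne, slope_def_field, hG0, sub_zero, sub_zero]
  have hPre : (P ζb).re = ‖a‖ ^ 2 * r ^ 2 - 2 * r ^ 2 * ‖a‖ * (G ζb / ζb).re := by
    simp only [hPdef, hDζ, Complex.sub_re, Complex.ofReal_re, Complex.re_ofReal_mul]
  have hkey : 0 ≤ Complex.normSq (G ζb) + (P ζb).re := by
    rw [hPre, Complex.div_re, hnormSqζ, Complex.normSq_apply]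
    have hr2 : (0 : ℝ) < r ^ 2 := pow_pos hr.1 2
    have hr2' : r ^ 2 ≠ 0 := hr2.ne'
    have hdiv : 2 * r ^ 2 * ‖a‖ * ((G ζb).re * ζb.re / r ^ 2 + (G ζb).im * ζb.im / r ^ 2)
        = 2 * ‖a‖ * ((G ζb).re * ζb.re + (G ζb).im * ζb.im) := by
      have hr0 : r ≠ 0 := hr.1.ne'
      field_simp
    rw [hdiv]
    have hpq : ζb.re ^ 2 + ζb.im ^ 2 = r ^ 2 := by
      have := hnormSqζ
      rw [Complex.normSq_apply] at this
      nlinarith [this]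
    have hpq' : ‖a‖ ^ 2 * ζb.re ^ 2 + ‖a‖ ^ 2 * ζb.im ^ 2 = ‖a‖ ^ 2 * r ^ 2 := by
      nlinarith [hpq]
    nlinarith [sq_nonneg ((G ζb).re - ‖a‖ * ζb.re), sq_nonneg ((G ζb).im - ‖a‖ * ζb.im), hpq']
  have hbd : Φ ζb ≤ ε * r ^ 2 := by
    have : Φ ζb = U (f ζb) - Complex.normSq (G ζb) - (P ζb).re + ε * Complex.normSq ζb := rfl
    rw [this, hnormSqζ]
    linarith [hUneg, hkey]
  rw [hΦ0v] at hΦ0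
  linarith [hΦ0, hbd]

lemma key_estimate {n : ℕ} {Ω : Set (EuclideanSpace ℂ (Fin n))} (hΩ : IsOpen Ω)
    {U : EuclideanSpace ℂ (Fin n) → ℝ}
    (hneg : ∀ z ∈ Ω, U z < 0) (hU : ContDiffOn ℝ 2 U Ω)
    (hhess : ∀ z ∈ Ω, ∀ v : EuclideanSpace ℂ (Fin n), ‖v‖ ^ 2 ≤ cHess U z v)
    {f : ℂ → EuclideanSpace ℂ (Fin n)} (hf : DifferentiableOn ℂ f (ball 0 1))
    (hmapf : MapsTo f (ball 0 1) Ω) {z : EuclideanSpace ℂ (Fin n)} (hz : z ∈ Ω)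
    (hf0 : f 0 = z) (ha : deriv f 0 ≠ 0) :
    ‖deriv f 0‖ ^ 2 ≤ -U z := by
  have h1 : ∀ r ∈ Ioo (0 : ℝ) 1, ‖deriv f 0‖ ^ 2 * r ^ 2 ≤ -U z := by
    intro r hrI
    have h2 : ∀ ε > (0 : ℝ), U z + ‖deriv f 0‖ ^ 2 * r ^ 2 ≤ 0 + ε := by
      intro ε hε
      have h3 := key_inner hΩ hneg hU hhess hf hmapf hz hf0 ha hrI hε
      have hr21 : r ^ 2 ≤ 1 := by nlinarith [hrI.1, hrI.2]
      nlinarith [hε]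
    have h3 : U z + ‖deriv f 0‖ ^ 2 * r ^ 2 ≤ 0 := le_of_forall_pos_le_add h2
    linarith
  have h4 : Tendsto (fun r : ℝ => ‖deriv f 0‖ ^ 2 * r ^ 2) (𝓝[<] (1 : ℝ))
      (𝓝 (‖deriv f 0‖ ^ 2)) := by
    have hco : Tendsto (fun r : ℝ => ‖deriv f 0‖ ^ 2 * r ^ 2) (𝓝 1)
        (𝓝 (‖deriv f 0‖ ^ 2 * 1 ^ 2)) := Continuous.tendsto (by continuity) 1
    have h5 : Tendsto (fun r : ℝ => ‖deriv f 0‖ ^ 2 * r ^ 2) (𝓝[<] (1 : ℝ))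
        (𝓝 (‖deriv f 0‖ ^ 2 * 1 ^ 2)) := hco.mono_left nhdsWithin_le_nhds
    simpa using h5
  exact le_of_tendsto h4 (eventually_of_mem (Ioo_mem_nhdsLT_of_mem ⟨one_pos, le_refl 1⟩) h1)

end
end SibonyAux

/-- If a bounded domain `Ω ⊂ ℂⁿ` (`n ≥ 2`) carries a negative plurisubharmonic
function `U`, smooth on `Ω`, with `|U(z)| ≤ C·δ_Ω(z)^{2/m}` and complex Hessian
bounded below by the identity, then `k_Ω(z;v) ≥ c·‖v‖/δ_Ω(z)^{1/m}`. -/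
theorem kob_lower_bound_from_psh {n : ℕ} (hn : 2 ≤ n)
    (Ω : Set (EuclideanSpace ℂ (Fin n))) (hΩ : IsOpen Ω) (hconn : IsConnected Ω)
    (hbdd : Bornology.IsBounded Ω)
    (m : ℝ) (hm : 2 < m) (C : ℝ) (hC : 0 < C)
    (U : EuclideanSpace ℂ (Fin n) → ℝ)
    (hpsh : IsPSH Ω U) (hneg : ∀ z ∈ Ω, U z < 0)
    (hsm : ContDiffOn ℝ (⊤ : ℕ∞) U Ω)
    (hsize : ∀ z ∈ Ω, |U z| ≤ C * (Metric.infDist z (frontier Ω)) ^ (2 / m : ℝ))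
    (hhess : ∀ z ∈ Ω, ∀ v : EuclideanSpace ℂ (Fin n), ‖v‖ ^ 2 ≤ cHess U z v) :
    ∃ c > (0 : ℝ), ∀ z ∈ Ω, ∀ v : EuclideanSpace ℂ (Fin n),
      c * ‖v‖ / (Metric.infDist z (frontier Ω)) ^ (1 / m : ℝ) ≤ kobMetric Ω z v := by

  have hU2 : ContDiffOn ℝ 2 U Ω := hsm.of_le (WithTop.coe_le_coe.mpr le_top)
  have hnt : Nontrivial (EuclideanSpace ℂ (Fin n)) := by
    have hpos : 0 < n := by omega
    refine ⟨⟨EuclideanSpace.single ⟨0, hpos⟩ (1 : ℂ), 0, ?_⟩⟩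
    intro h
    have := congrArg (fun x : EuclideanSpace ℂ (Fin n) => x ⟨0, hpos⟩) h
    simp [EuclideanSpace.single_apply] at this
  have hfr : (frontier Ω).Nonempty := by
    rw [nonempty_frontier_iff]
    refine ⟨hconn.nonempty, ?_⟩
    intro huniv
    rw [huniv] at hbdd
    exact NormedSpace.unbounded_univ ℝ (EuclideanSpace ℂ (Fin n)) hbdd
  have hCs : (0 : ℝ) < Real.sqrt C := Real.sqrt_pos.mpr hC
  refine ⟨(Real.sqrt C)⁻¹, by positivity, ?_⟩
  intro z hz v
  set δ := Metric.infDist z (frontier Ω) with hδdef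
  have hzfr : z ∉ frontier Ω := by
    rw [hΩ.frontier_eq]
    exact fun h => h.2 hz
  have hδpos : 0 < δ := (isClosed_frontier.notMem_iff_infDist_pos hfr).mp hzfr
  have hδm : (0 : ℝ) < δ ^ (1 / m : ℝ) := Real.rpow_pos_of_pos hδpos _
  -- the defining set of the Kobayashi metric is nonempty
  have hSne : {r : ℝ | ∃ (c : ℂ) (f : ℂ → EuclideanSpace ℂ (Fin n)),
      DifferentiableOn ℂ f (ball 0 1) ∧ MapsTo f (ball 0 1) Ω ∧
      f 0 = z ∧ c • derivWithin f (ball 0 1) 0 = v ∧ r = ‖c‖}.Nonempty := by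
    by_cases hv : v = 0
    · refine ⟨‖(0 : ℂ)‖, 0, fun _ => z, differentiableOn_const z, fun ζ _ => hz, rfl, ?_, rfl⟩
      rw [hv, zero_smul]
    · obtain ⟨ρ, hρ, hball⟩ := Metric.isOpen_iff.mp hΩ z hz
      have hvn : (0 : ℝ) < ‖v‖ := norm_pos_iff.mpr hv
      set lam : ℝ := ρ / (2 * ‖v‖) with hlamdef
      have hlam : 0 < lam := by positivity
      set w₀ : EuclideanSpace ℂ (Fin n) := ((lam : ℝ) : ℂ) • v with hw₀def
      have hw₀n : ‖w₀‖ = lam * ‖v‖ := by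
        rw [hw₀def, norm_smul]
        simp [abs_of_pos hlam]
      set f : ℂ → EuclideanSpace ℂ (Fin n) := fun ζ => z + ζ • w₀ with hfdef
      have hder : ∀ ξ : ℂ, HasDerivAt f w₀ ξ := by
        intro ξ
        simpa [hfdef] using ((hasDerivAt_id ξ).smul_const w₀).const_add z
      have hdw : derivWithin f (ball 0 1) 0 = w₀ :=
        (hder 0).hasDerivWithinAt.derivWithin
          (IsOpen.uniqueDiffWithinAt isOpen_ball (mem_ball_self one_pos))
      refine ⟨‖(((lam⁻¹ : ℝ)) : ℂ)‖, ((lam⁻¹ : ℝ) : ℂ), f, ?_, ?_, by simp [hfdef], ?_, rfl⟩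
      · exact fun ξ _ => (hder ξ).differentiableAt.differentiableWithinAt
      · intro ζ hζ
        apply hball
        have : dist (f ζ) z = ‖ζ • w₀‖ := by
          rw [hfdef, dist_eq_norm]
          simp
        rw [mem_ball, this, norm_smul, hw₀n]
        have hζn : ‖ζ‖ < 1 := by simpa using hζ
        have : lam * ‖v‖ = ρ / 2 := by
          rw [hlamdef]
          field_simp
        rw [this]
        nlinarith [norm_nonneg ζ, hρ]
      · rw [hdw, hw₀def, smul_smul, ← Complex.ofReal_mul, inv_mul_cancel₀ hlam.ne', Complex.ofReal_one, one_smul]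
  rw [kobMetric]
  apply le_csInf hSne
  rintro b ⟨c, f, hfd, hfm, hf0, hderiveq, rfl⟩
  by_cases hv : v = 0
  · rw [hv]
    simp only [norm_zero, mul_zero, zero_div]
    exact norm_nonneg c
  · have hdw : derivWithin f (ball 0 1) 0 = deriv f 0 :=
      derivWithin_of_isOpen isOpen_ball (mem_ball_self one_pos)
    set a : EuclideanSpace ℂ (Fin n) := deriv f 0 with hadef
    have hane : a ≠ 0 := by
      intro h0
      apply hv
      rw [← hderiveq, hdw, h0, smul_zero]
    have hK : ‖a‖ ^ 2 ≤ -U z := key_estimate hΩ hneg hU2 hhess hfd hfm hz hf0 hane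
    have hUz : -U z ≤ C * δ ^ (2 / m : ℝ) := by
      have h := hsize z hz
      rwa [abs_of_neg (hneg z hz)] at h
    have hCeq : C * δ ^ (2 / m : ℝ) = (Real.sqrt C * δ ^ (1 / m : ℝ)) ^ 2 := by
      rw [mul_pow, Real.sq_sqrt hC.le]
      congr 1
      rw [← Real.rpow_natCast (δ ^ (1 / m : ℝ)) 2, ← Real.rpow_mul hδpos.le]
      congr 1
      push_cast
      ring
    have hBpos : (0 : ℝ) < Real.sqrt C * δ ^ (1 / m : ℝ) := by positivity
    have hnorma : ‖a‖ ≤ Real.sqrt C * δ ^ (1 / m : ℝ) := by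
      have h2 : ‖a‖ ^ 2 ≤ (Real.sqrt C * δ ^ (1 / m : ℝ)) ^ 2 := by
        rw [← hCeq]
        linarith
      nlinarith [norm_nonneg a, hBpos, h2]
    have hva : ‖v‖ = ‖c‖ * ‖a‖ := by
      rw [← hderiveq, hdw, norm_smul]
    rw [div_le_iff₀ hδm]
    calc (Real.sqrt C)⁻¹ * ‖v‖
        ≤ (Real.sqrt C)⁻¹ * (‖c‖ * (Real.sqrt C * δ ^ (1 / m : ℝ))) := by
          apply mul_le_mul_of_nonneg_left _ (by positivity)
          rw [hva]
          exact mul_le_mul_of_nonneg_left hnorma (norm_nonneg c)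
      _ = ‖c‖ * δ ^ (1 / m : ℝ) := by
          field_simp
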